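/- Let β, r, θ, c > 0 and h ∈ {1,2}. The Jacobian matrix of V_h at the fixed point (1,0) is upper triangular with eigenvalues λ₁ = 0 and λ₂ = β + 1 - r - θ/(1+c). Moreover |λ₂| < 1 (so both eigenvalues have modulus strictly less than 1 and (1,0) is attractive) if and only if (β - r)(1+c) < θ < (2 + β - r)(1+c); |λ₂| = 1 (nonhyperbolic) if and only if θ = (β - r)(1+c) or θ = (2 + β - r)(1+c); and otherwise |λ₂| > 1 (saddle). -/
import Mathlib


/-- The Jacobian matrix of the map
`V_h(u,v) = (u(2-u) - u v, β u v + (1-r) v - θ u^h v/(1 + c u^h))` at the point `(u,v)`. -/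
noncomputable def Jh (β r θ c : ℝ) (h : ℕ) (u v : ℝ) : Matrix (Fin 2) (Fin 2) ℝ :=
  !![2 - 2 * u - v, -u;
     β * v - θ * (h : ℝ) * u ^ (h - 1) * v / (1 + c * u ^ h) ^ 2,
     β * u + 1 - r - θ * u ^ h / (1 + c * u ^ h)]

/-- The Jacobian of `V_h` at the fixed point `(1,0)` is upper triangular with
eigenvalues `λ₁ = 0` and `λ₂ = β + 1 - r - θ/(1+c)`.  Moreover `|λ₂| < 1`
(so `(1,0)` is attractive) iff `(β-r)(1+c) < θ < (2+β-r)(1+c)`; `|λ₂| = 1`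
(nonhyperbolic) iff `θ = (β-r)(1+c)` or `θ = (2+β-r)(1+c)`; otherwise `|λ₂| > 1`
(saddle). -/
theorem one_zero_classification (β r θ c : ℝ) (hβ : 0 < β) (hr : 0 < r)
    (hθ : 0 < θ) (hc : 0 < c) (h : ℕ) (hh : h = 1 ∨ h = 2) :
    Jh β r θ c h 1 0 = !![(0 : ℝ), -1; 0, β + 1 - r - θ / (1 + c)] ∧
    (|β + 1 - r - θ / (1 + c)| < 1 ↔
      ((β - r) * (1 + c) < θ ∧ θ < (2 + β - r) * (1 + c))) ∧
    (|β + 1 - r - θ / (1 + c)| = 1 ↔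
      (θ = (β - r) * (1 + c) ∨ θ = (2 + β - r) * (1 + c))) ∧
    ((θ < (β - r) * (1 + c) ∨ (2 + β - r) * (1 + c) < θ) →
      1 < |β + 1 - r - θ / (1 + c)|) := by
  have hcpos : (0:ℝ) < 1 + c := by linarith
  have hcne : (1:ℝ) + c ≠ 0 := ne_of_gt hcpos
  have hq : θ / (1 + c) * (1 + c) = θ := div_mul_cancel₀ θ hcne
  have key : ∀ x : ℝ, β + 1 - r - θ / (1 + c) = x ↔ θ = (β + 1 - r - x) * (1 + c) := by
    intro x; constructor <;> intro hx <;> nlinarith [hq, hcpos]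
  have key2 : ∀ x : ℝ, β + 1 - r - θ / (1 + c) < x ↔ (β + 1 - r - x) * (1 + c) < θ := by
    intro x; constructor <;> intro hx <;> nlinarith [hq, hcpos]
  have key3 : ∀ x : ℝ, x < β + 1 - r - θ / (1 + c) ↔ θ < (β + 1 - r - x) * (1 + c) := by
    intro x; constructor <;> intro hx <;> nlinarith [hq, hcpos]
  refine ⟨?_, ?_, ?_, ?_⟩
  · unfold Jh
    ext i j
    fin_cases i <;> fin_cases j <;> simp [one_pow] <;> ring
  · rw [abs_lt, key2 1, key3 (-1)]
    constructor <;> rintro ⟨h1, h2⟩ <;> constructor <;> nlinarith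
  · rw [abs_eq (by norm_num : (0:ℝ) ≤ 1), key 1, key (-1)]
    constructor <;> rintro (h1 | h1)
    · left; nlinarith
    · right; nlinarith
    · left; nlinarith
    · right; nlinarith
  · intro hcase
    rw [lt_abs]
    rcases hcase with h1 | h1
    · left; rw [key3 1]; nlinarith
    · right
      have := (key2 (-1)).mpr (by nlinarith)
      linarith
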